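/- In the planar bipartite graph obtained after deleting all S_f–S_f edges from a nesting graph, every inner face is incident to at least two edges of the cycle C. -/

import Mathlib

/-- The bipartite graph obtained from a nesting graph after deleting all edges
among the split vertices: a cycle on `Fin m` (cyclic successor adjacency),
where each cycle vertex `i` is joined to its unique split neighbor
`nbr i ∈ Fin s`. -/
def nestGraph0 (m s : ℕ) (nbr : Fin m → Fin s) :
    SimpleGraph (Fin m ⊕ Fin s) :=
  SimpleGraph.fromRel fun a b =>
    match a, b with
    | Sum.inl i, Sum.inl j => j.1 = (i.1 + 1) % m
    | Sum.inl i, Sum.inr t => nbr i = t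
    | _, _ => False

open SimpleGraph Walk Sum

theorem SimpleGraph.Walk.IsCycle.exists_mem_edges_ne {V : Type*} {G : SimpleGraph V} {u v : V}
    {W : G.Walk u u} (hW : W.IsCycle) (hv : v ∈ W.support) (x : V) :
    ∃ y ≠ x, s(v, y) ∈ W.edges := by
  obtain ⟨y, hy, hyx⟩ := Set.exists_ne_of_one_lt_ncard
    (by rw [hW.ncard_neighborSet_toSubgraph_eq_two hv]; norm_num) x
  exact ⟨y, hyx, adj_toSubgraph_iff_mem_edges.mp hy⟩

namespace nestGraph0

variable {m s : ℕ} {nbr : Fin m → Fin s} {i j : Fin m} {t : Fin s}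

lemma adj_inl_inr : (nestGraph0 m s nbr).Adj (inl i) (inr t) ↔ nbr i = t := by
  simp [nestGraph0]

lemma adj_inr_inl : (nestGraph0 m s nbr).Adj (inr t) (inl i) ↔ nbr i = t := by
  simp [nestGraph0]

lemma not_adj_inr_inr {t' : Fin s} : ¬ (nestGraph0 m s nbr).Adj (inr t) (inr t') := by
  simp [nestGraph0]

lemma adj_inl_inl : (nestGraph0 m s nbr).Adj (inl i) (inl j) ↔
    i ≠ j ∧ (j.1 = (i.1 + 1) % m ∨ i.1 = (j.1 + 1) % m) := by
  simp [nestGraph0]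

lemma nbr_ne_of_adj_inl_inl
    (hnonadj : ∀ i j : Fin m, j.1 = (i.1 + 1) % m → i ≠ j → nbr i ≠ nbr j)
    (h : (nestGraph0 m s nbr).Adj (inl i) (inl j)) : nbr i ≠ nbr j := by
  obtain ⟨hne, h | h⟩ := adj_inl_inl.mp h
  · exact hnonadj i j h hne
  · exact (hnonadj j i h hne.symm).symm

lemma exists_eq_inl_of_adj_inr {y : Fin m ⊕ Fin s} (h : (nestGraph0 m s nbr).Adj (inr t) y) :
    ∃ k, y = inl k ∧ nbr k = t := by
  cases y with
  | inl k => exact ⟨k, rfl, adj_inr_inl.mp h⟩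
  | inr t' => exact (not_adj_inr_inr h).elim

variable {v : Fin m ⊕ Fin s} {W : (nestGraph0 m s nbr).Walk v v}

lemma exists_inl_mem_support (hW : W.IsCycle) : ∃ i, inl i ∈ W.support := by
  cases v with
  | inl i => exact ⟨i, W.start_mem_support⟩
  | inr t =>
    obtain ⟨y, -, hy⟩ := hW.exists_mem_edges_ne W.start_mem_support (inr t)
    obtain ⟨k, rfl, -⟩ := exists_eq_inl_of_adj_inr (W.adj_of_mem_edges hy)
    exact ⟨k, W.snd_mem_support_of_mem_edges hy⟩

/-- A cycle vertex has only one spoke, so the cycle leaves it along an edge of `C`. -/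
lemma exists_inl_mem_edges (hW : W.IsCycle) (hi : inl i ∈ W.support) :
    ∃ j, s(inl i, inl j) ∈ W.edges := by
  obtain ⟨y, hy, he⟩ := hW.exists_mem_edges_ne hi (inr (nbr i))
  cases y with
  | inl j => exact ⟨j, he⟩
  | inr t => exact (hy (by rw [adj_inl_inr.mp (W.adj_of_mem_edges he)])).elim

lemma exists_ne_of_inr_mem_support (hW : W.IsCycle) (ht : inr t ∈ W.support) :
    ∃ k₁ k₂, k₁ ≠ k₂ ∧ inl k₁ ∈ W.support ∧ inl k₂ ∈ W.support ∧
      nbr k₁ = t ∧ nbr k₂ = t := by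
  obtain ⟨y₁, -, he₁⟩ := hW.exists_mem_edges_ne ht (inr t)
  obtain ⟨y₂, hne, he₂⟩ := hW.exists_mem_edges_ne ht y₁
  obtain ⟨k₁, rfl, hk₁⟩ := exists_eq_inl_of_adj_inr (W.adj_of_mem_edges he₁)
  obtain ⟨k₂, rfl, hk₂⟩ := exists_eq_inl_of_adj_inr (W.adj_of_mem_edges he₂)
  exact ⟨k₁, k₂, fun h => hne (h ▸ rfl), W.snd_mem_support_of_mem_edges he₁,
    W.snd_mem_support_of_mem_edges he₂, hk₁, hk₂⟩

/-- Every cycle vertex on `W` lies on a `C`-edge of `W`, so with a single such edge `ij` the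
spoke of `i` enters `W` at the split vertex `nbr i`, whose two `W`-neighbours must then be `i`
and `j`. -/
lemma false_of_forall_inl_mem_edges_eq
    (hnonadj : ∀ i j : Fin m, j.1 = (i.1 + 1) % m → i ≠ j → nbr i ≠ nbr j)
    (hW : W.IsCycle) (hij : s(inl i, inl j) ∈ W.edges)
    (honly : ∀ k l, s(inl k, inl l) ∈ W.edges →
      s(inl k, inl l) = (s(inl i, inl j) : Sym2 (Fin m ⊕ Fin s))) : False := by
  have hinl : ∀ k, inl k ∈ W.support → k = i ∨ k = j := by
    intro k hk
    obtain ⟨l, hkl⟩ := exists_inl_mem_edges hW hk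
    have hmem := Sym2.mem_mk_left (inl k) (inl l : Fin m ⊕ Fin s)
    rw [honly k l hkl, Sym2.mem_iff] at hmem
    simpa using hmem
  have hspoke : inr (nbr i) ∈ W.support := by
    obtain ⟨y, hy, he⟩ :=
      hW.exists_mem_edges_ne (W.fst_mem_support_of_mem_edges hij) (inl j)
    cases y with
    | inl k => exact (hy (by rw [Sym2.congr_right.mp (honly i k he)])).elim
    | inr t =>
      rw [adj_inl_inr.mp (W.adj_of_mem_edges he)]
      exact W.snd_mem_support_of_mem_edges he
  obtain ⟨k₁, k₂, hk, hk₁, hk₂, hn₁, hn₂⟩ := exists_ne_of_inr_mem_support hW hspoke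
  refine nbr_ne_of_adj_inl_inl hnonadj (W.adj_of_mem_edges hij) ?_
  rcases hinl k₁ hk₁ with rfl | rfl <;> rcases hinl k₂ hk₂ with rfl | rfl <;> simp_all

end nestGraph0

/-- Inner faces are represented by their boundary cycles, so the claim is made for every
cycle. -/
theorem stmt9 (m s : ℕ) (nbr : Fin m → Fin s)
    (hnonadj : ∀ i j : Fin m, j.1 = (i.1 + 1) % m → i ≠ j → nbr i ≠ nbr j)
    (v : Fin m ⊕ Fin s) (W : (nestGraph0 m s nbr).Walk v v) (hW : W.IsCycle) :
    ∃ e₁ ∈ W.edges, ∃ e₂ ∈ W.edges, e₁ ≠ e₂ ∧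
      (∃ i j : Fin m, e₁ = s(Sum.inl i, Sum.inl j)) ∧
      (∃ i j : Fin m, e₂ = s(Sum.inl i, Sum.inl j)) := by
  obtain ⟨i, hi⟩ := nestGraph0.exists_inl_mem_support hW
  obtain ⟨j, hij⟩ := nestGraph0.exists_inl_mem_edges hW hi
  by_contra hfew
  refine nestGraph0.false_of_forall_inl_mem_edges_eq hnonadj hW hij fun k l hkl => ?_
  by_contra hne
  exact hfew ⟨_, hij, _, hkl, Ne.symm hne, ⟨i, j, rfl⟩, ⟨k, l, rfl⟩⟩
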